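/- Let η be a smooth flow map with ∂_t η = v, η(0) = id, and a = (Dη)⁻¹. Then the Cauchy-invariance-type computation for the MHD system gives: ∂_t(ε^{μντ} ∂_ν v^m ∂_τ η_m) = ε^{μντ} ∂_ν (b₀^σ ∂_σ b^m) ∂_τ η_m, whenever v satisfies ∂_t v_α + a^{ℓ}_{α} ∂_ℓ Q = b₀^σ ∂_σ b_α; in particular the Euler contribution ε^{μντ} ∂_ν (a^{ℓm} ∂_ℓ Q) ∂_τ η_m vanishes, as does ε^{μντ} ∂_ν v^m ∂_τ v_m. -/

import Mathlib

/-- Partial derivative in direction `j` of a scalar function on `ℝ³`. -/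
noncomputable def pd (j : Fin 3) (f : (Fin 3 → ℝ) → ℝ) (y : Fin 3 → ℝ) : ℝ :=
  fderiv ℝ f y (Pi.single j 1)

/-- Jacobian matrix `(Jac f y) i j = ∂_j f^i (y)`. -/
noncomputable def Jac (f : (Fin 3 → ℝ) → (Fin 3 → ℝ)) (y : Fin 3 → ℝ) :
    Matrix (Fin 3) (Fin 3) ℝ :=
  fun i j => pd j (fun z => f z i) y

/-- Levi-Civita symbol on three indices. -/
def levi (i j k : Fin 3) : ℝ :=
  ((((j : ℤ) - (i : ℤ)) * ((k : ℤ) - (i : ℤ)) * ((k : ℤ) - (j : ℤ)) / 2 : ℤ) : ℝ)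


open scoped Topology

abbrev E3 := Fin 3 → ℝ

lemma levi_contract (μ : Fin 3) (f : Fin 3 → Fin 3 → ℝ) (hf : ∀ ν τ, f ν τ = f τ ν) :
    ∑ ν : Fin 3, ∑ τ : Fin 3, levi μ ν τ * f ν τ = 0 := by
  fin_cases μ <;>
    simp [Fin.sum_univ_three, levi] <;>
    linarith [hf 0 1, hf 0 2, hf 1 2]

variable {F' : Type*} [NormedAddCommGroup F'] [NormedSpace ℝ F']

lemma hasFDerivAt_slice {F : ℝ × E3 → F'} {s : ℝ} {y : E3}
    (hF : DifferentiableAt ℝ F (s, y)) :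
    HasFDerivAt (fun z => F (s, z))
      ((fderiv ℝ F (s, y)).comp ((0 : E3 →L[ℝ] ℝ).prod (ContinuousLinearMap.id ℝ E3))) y :=
  hF.hasFDerivAt.comp y (((hasFDerivAt_const s y).prodMk (hasFDerivAt_id y)))

lemma hasDerivAt_slice {F : ℝ × E3 → F'} {t : ℝ} {y : E3}
    (hF : DifferentiableAt ℝ F (t, y)) :
    HasDerivAt (fun s => F (s, y)) (fderiv ℝ F (t, y) (1, 0)) t := by
  have h := hF.hasFDerivAt.comp_hasDerivAt t ((hasDerivAt_id t).prodMk (hasDerivAt_const t y))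
  simpa [Function.comp_def] using h

lemma fderiv_slice {F : ℝ × E3 → F'} {s : ℝ} {y : E3}
    (hF : DifferentiableAt ℝ F (s, y)) (e : E3) :
    fderiv ℝ (fun z => F (s, z)) y e = fderiv ℝ F (s, y) (0, e) := by
  rw [(hasFDerivAt_slice hF).fderiv]
  simp

lemma swap_time_space (F : ℝ × E3 → ℝ) (hF : ContDiff ℝ (⊤ : ℕ∞) F) (W : E3 → ℝ)
    (t : ℝ) (y : E3)
    (hW : ∀ᶠ z in nhds y, HasDerivAt (fun s => F (s, z)) (W z) t) (e : E3) :
    HasDerivAt (fun s => fderiv ℝ (fun z => F (s, z)) y e) (fderiv ℝ W y e) t := by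
  set G := fderiv ℝ F with hGdef
  have hG : ContDiff ℝ (⊤ : ℕ∞) G := hF.fderiv_right (by simp)
  have hFd : Differentiable ℝ F := hF.differentiable (by simp)
  -- rewrite the function
  have hfun : (fun s => fderiv ℝ (fun z => F (s, z)) y e) = fun s => G (s, y) (0, e) := by
    funext s; exact fderiv_slice (hFd _) e
  -- derivative of s ↦ G (s,y)
  have h1 : HasDerivAt (fun s => G (s, y)) (fderiv ℝ G (t, y) (1, 0)) t :=
    hasDerivAt_slice (hG.differentiable (by simp) _)
  have h2 : HasDerivAt (fun s => G (s, y) (0, e)) (fderiv ℝ G (t, y) (1, 0) (0, e)) t := by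
    have := ((ContinuousLinearMap.apply ℝ ℝ ((0 : ℝ), e)).hasFDerivAt).comp_hasDerivAt t h1
    simpa [Function.comp_def] using this
  -- symmetry of second derivative
  have hsym : fderiv ℝ G (t, y) (1, 0) (0, e) = fderiv ℝ G (t, y) (0, e) (1, 0) := by
    have := (hF.contDiffAt (x := (t, y))).isSymmSndFDerivAt (by rw [minSmoothness_of_isRCLikeNormedField]; exact WithTop.coe_le_coe.2 le_top)
    exact this _ _
  -- identify fderiv W with the mixed derivative
  have hWeq : W =ᶠ[nhds y] fun z => G (t, z) (1, 0) := by
    filter_upwards [hW] with z hz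
    exact hz.unique (hasDerivAt_slice (hFd _))
  have h3 : fderiv ℝ W y e = fderiv ℝ (fun z => G (t, z) (1, 0)) y e := by
    rw [hWeq.fderiv_eq]
  have h4 : fderiv ℝ (fun z => G (t, z) (1, 0)) y e = fderiv ℝ G (t, y) (0, e) (1, 0) := by
    have hd : DifferentiableAt ℝ (fun z => G (t, z)) y :=
      (hasFDerivAt_slice (hG.differentiable (by simp) _)).differentiableAt
    have h5 : fderiv ℝ (fun z => G (t, z) (1, 0)) y
        = (ContinuousLinearMap.apply ℝ ℝ ((1:ℝ), (0:E3))).comp (fderiv ℝ (fun z => G (t, z)) y) := by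
      have := ((ContinuousLinearMap.apply ℝ ℝ ((1:ℝ), (0:E3))).hasFDerivAt.comp y hd.hasFDerivAt)
      exact this.fderiv
    rw [h5]
    simp only [ContinuousLinearMap.coe_comp', Function.comp_apply, ContinuousLinearMap.apply_apply]
    rw [(hasFDerivAt_slice (hG.differentiable (by simp) _)).fderiv]
    simp
  rw [hfun, h3, h4, ← hsym]
  exact h2

lemma pd_slice_smooth (F : ℝ × E3 → ℝ) (hF : ContDiff ℝ (⊤ : ℕ∞) F) (t : ℝ) (j : Fin 3) :
    ContDiff ℝ (⊤ : ℕ∞) (fun z => pd j (fun w => F (t, w)) z) := by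
  have hFd : Differentiable ℝ F := hF.differentiable (by simp)
  have hfun : (fun z => pd j (fun w => F (t, w)) z)
      = fun z => (fderiv ℝ F (t, z)) (0, Pi.single j 1) := by
    funext z; exact fderiv_slice (hFd _) _
  rw [hfun]
  have hG : ContDiff ℝ (⊤ : ℕ∞) (fun z : E3 => fderiv ℝ F (t, z)) :=
    (hF.fderiv_right (by simp)).comp (contDiff_prodMk_right t)
  exact hG.clm_apply contDiff_const

lemma clairaut (f : E3 → ℝ) (hf : ContDiff ℝ (⊤ : ℕ∞) f) (y : E3) (ν τ : Fin 3) :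
    pd ν (fun z => pd τ f z) y = pd τ (fun z => pd ν f z) y := by
  have hfd : Differentiable ℝ (fderiv ℝ f) := (hf.fderiv_right (m := (⊤ : ℕ∞)) (by simp)).differentiable (by simp)
  have key : ∀ e w : E3, fderiv ℝ (fun z => fderiv ℝ f z w) y e
      = fderiv ℝ (fderiv ℝ f) y e w := by
    intro e w
    have h5 : fderiv ℝ (fun z => fderiv ℝ f z w) y
        = (ContinuousLinearMap.apply ℝ ℝ w).comp (fderiv ℝ (fderiv ℝ f) y) :=
      (((ContinuousLinearMap.apply ℝ ℝ w).hasFDerivAt.comp y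
        (hfd y).hasFDerivAt)).fderiv
    rw [h5]; rfl
  have hsym := (hf.contDiffAt (x := y)).isSymmSndFDerivAt ((by rw [minSmoothness_of_isRCLikeNormedField]; exact WithTop.coe_le_coe.2 le_top))
  simp only [pd, key]
  exact hsym _ _

lemma pd_congr {f g : E3 → ℝ} {y : E3} (h : f =ᶠ[nhds y] g) (j : Fin 3) :
    pd j f y = pd j g y := by
  unfold pd; rw [h.fderiv_eq]

lemma pd_const (c : ℝ) (j : Fin 3) (y : E3) : pd j (fun _ => c) y = 0 := by
  unfold pd; simp

lemma pd_mul {f g : E3 → ℝ} {y : E3} (hf : DifferentiableAt ℝ f y)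
    (hg : DifferentiableAt ℝ g y) (j : Fin 3) :
    pd j (fun z => f z * g z) y = pd j f y * g y + f y * pd j g y := by
  unfold pd
  rw [fderiv_fun_mul hf hg]
  simp [smul_eq_mul]; ring

lemma pd_sum {ι : Type*} (s : Finset ι) {f : ι → E3 → ℝ} {y : E3}
    (hf : ∀ i ∈ s, DifferentiableAt ℝ (f i) y) (j : Fin 3) :
    pd j (fun z => ∑ i ∈ s, f i z) y = ∑ i ∈ s, pd j (f i) y := by
  unfold pd
  rw [fderiv_fun_sum hf]
  simp

lemma pd_neg_add {f g : E3 → ℝ} {y : E3} (hf : DifferentiableAt ℝ f y)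
    (hg : DifferentiableAt ℝ g y) (j : Fin 3) :
    pd j (fun z => -f z + g z) y = -pd j f y + pd j g y := by
  unfold pd
  rw [fderiv_fun_add (f := fun z => -f z) hf.neg hg, fderiv_fun_neg]
  simp

/-- failure of the Cauchy invariance for MHD. If
`∂_t v_α + a^ℓ_α ∂_ℓ Q = b₀^σ ∂_σ b_α`, then
`∂_t(ε^{μντ} ∂_ν v^m ∂_τ η_m) = ε^{μντ} ∂_ν (b₀^σ ∂_σ b^m) ∂_τ η_m`; in
particular `ε^{μντ} ∂_ν (a^{ℓm} ∂_ℓ Q) ∂_τ η_m = 0` and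
`ε^{μντ} ∂_ν v^m ∂_τ v_m = 0`. -/
theorem cauchy_invariance_mhd
    (Ω : Set (Fin 3 → ℝ)) (hΩ : IsOpen Ω)
    (η v b : ℝ → (Fin 3 → ℝ) → (Fin 3 → ℝ)) (Q : ℝ → (Fin 3 → ℝ) → ℝ)
    (hη_smooth : ContDiff ℝ (⊤ : ℕ∞) (fun p : ℝ × (Fin 3 → ℝ) => η p.1 p.2))
    (hv_smooth : ContDiff ℝ (⊤ : ℕ∞) (fun p : ℝ × (Fin 3 → ℝ) => v p.1 p.2))
    (hb_smooth : ContDiff ℝ (⊤ : ℕ∞) (fun p : ℝ × (Fin 3 → ℝ) => b p.1 p.2))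
    (hQ_smooth : ContDiff ℝ (⊤ : ℕ∞) (fun p : ℝ × (Fin 3 → ℝ) => Q p.1 p.2))
    (hinit : ∀ y ∈ Ω, η 0 y = y)
    (hflow : ∀ t, ∀ y ∈ Ω, HasDerivAt (fun s => η s y) (v t y) t)
    (hinv : ∀ t, ∀ y ∈ Ω, IsUnit (Jac (η t) y))
    (heq : ∀ t, ∀ y ∈ Ω, ∀ α : Fin 3,
      HasDerivAt (fun s => v s y α)
        (-(∑ l : Fin 3, (Jac (η t) y)⁻¹ l α * pd l (Q t) y)
          + ∑ σ : Fin 3, b 0 y σ * pd σ (fun z => b t z α) y) t) :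
    ∀ t, ∀ y ∈ Ω, ∀ μ : Fin 3,
      (HasDerivAt
        (fun s => ∑ ν : Fin 3, ∑ τ : Fin 3, ∑ m : Fin 3,
          levi μ ν τ * pd ν (fun z => v s z m) y * pd τ (fun z => η s z m) y)
        (∑ ν : Fin 3, ∑ τ : Fin 3, ∑ m : Fin 3,
          levi μ ν τ *
            pd ν (fun z => ∑ σ : Fin 3, b 0 z σ * pd σ (fun w => b t w m) z) y *
            pd τ (fun z => η t z m) y) t)
      ∧ (∑ ν : Fin 3, ∑ τ : Fin 3, ∑ m : Fin 3,
          levi μ ν τ *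
            pd ν (fun z => ∑ l : Fin 3, (Jac (η t) z)⁻¹ l m * pd l (Q t) z) y *
            pd τ (fun z => η t z m) y = 0)
      ∧ (∑ ν : Fin 3, ∑ τ : Fin 3, ∑ m : Fin 3,
          levi μ ν τ * pd ν (fun z => v t z m) y * pd τ (fun z => v t z m) y
            = 0) := by
  intro t y hy μ
  have hyΩ : Ω ∈ 𝓝 y := hΩ.mem_nhds hy
  -- component smoothness
  have hηm : ∀ m : Fin 3, ContDiff ℝ (⊤ : ℕ∞) (fun p : ℝ × E3 => η p.1 p.2 m) := fun m =>
    (contDiff_pi.1 hη_smooth) m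
  have hvm : ∀ m : Fin 3, ContDiff ℝ (⊤ : ℕ∞) (fun p : ℝ × E3 => v p.1 p.2 m) := fun m =>
    (contDiff_pi.1 hv_smooth) m
  have hbm : ∀ m : Fin 3, ContDiff ℝ (⊤ : ℕ∞) (fun p : ℝ × E3 => b p.1 p.2 m) := fun m =>
    (contDiff_pi.1 hb_smooth) m
  -- entries of Jacobian are smooth in z
  have hA : ∀ (i j : Fin 3), ContDiff ℝ (⊤ : ℕ∞) (fun z => Jac (η t) z i j) := by
    intro i j
    exact pd_slice_smooth (fun p => η p.1 p.2 i) (hηm i) t j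
  -- pd of Q is smooth
  have hq : ∀ l : Fin 3, ContDiff ℝ (⊤ : ℕ∞) (fun z => pd l (Q t) z) :=
    fun l => pd_slice_smooth (fun p => Q p.1 p.2) hQ_smooth t l
  -- pd of b components smooth
  have hpdb : ∀ (σ m : Fin 3), ContDiff ℝ (⊤ : ℕ∞) (fun z => pd σ (fun w => b t w m) z) :=
    fun σ m => pd_slice_smooth (fun p => b p.1 p.2 m) (hbm m) t σ
  have hb0 : ∀ σ : Fin 3, ContDiff ℝ (⊤ : ℕ∞) (fun z => b 0 z σ) := by
    intro σ
    exact (hbm σ).comp (contDiff_prodMk_right (0 : ℝ))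
  -- determinant smooth, nonzero at y
  have hdet : ContDiff ℝ (⊤ : ℕ∞) (fun z => (Jac (η t) z).det) := by
    simp only [Matrix.det_fin_three]
    exact ((((((((hA 0 0).mul (hA 1 1)).mul (hA 2 2)).sub
      (((hA 0 0).mul (hA 1 2)).mul (hA 2 1))).sub
      (((hA 0 1).mul (hA 1 0)).mul (hA 2 2))).add
      (((hA 0 1).mul (hA 1 2)).mul (hA 2 0))).add
      (((hA 0 2).mul (hA 1 0)).mul (hA 2 1))).sub
      (((hA 0 2).mul (hA 1 1)).mul (hA 2 0)))
  have hdetne : ∀ z ∈ Ω, (Jac (η t) z).det ≠ 0 := by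
    intro z hz
    have := (Matrix.isUnit_iff_isUnit_det _).1 (hinv t z hz)
    exact this.ne_zero
  -- adjugate entries smooth
  have hadj : ∀ (l m : Fin 3), ContDiff ℝ (⊤ : ℕ∞) (fun z => (Jac (η t) z).adjugate l m) := by
    intro l m
    simp only [Matrix.adjugate_fin_three]
    fin_cases l <;> fin_cases m <;>
      simp only [Matrix.cons_val', Matrix.cons_val_zero, Matrix.cons_val_one,
        Matrix.head_cons, Matrix.empty_val', Matrix.cons_val_fin_one, Matrix.head_fin_const,
        Matrix.cons_val_two, Matrix.tail_cons, Fin.isValue] <;>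
      first
        | exact ((hA _ _).mul (hA _ _)).sub ((hA _ _).mul (hA _ _))
        | exact (((hA _ _).mul (hA _ _)).neg).add ((hA _ _).mul (hA _ _))
  -- inverse entries differentiable at points of Ω
  have hia : ∀ (l m : Fin 3) (z : E3), z ∈ Ω →
      DifferentiableAt ℝ (fun w => (Jac (η t) w)⁻¹ l m) z := by
    intro l m z hz
    have hrw : (fun w => (Jac (η t) w)⁻¹ l m)
        = fun w => ((Jac (η t) w).det)⁻¹ * (Jac (η t) w).adjugate l m := by
      funext w
      rw [Matrix.inv_def, Ring.inverse_eq_inv]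
      simp [smul_eq_mul]
    rw [hrw]
    exact ((hdet.differentiable (by simp) z).inv (hdetne z hz)).mul
      ((hadj l m).differentiable (by simp) z)
  -- differentiability of P and B at y
  have hPdiff : ∀ m : Fin 3, DifferentiableAt ℝ
      (fun z => ∑ l : Fin 3, (Jac (η t) z)⁻¹ l m * pd l (Q t) z) y := by
    intro m
    exact DifferentiableAt.fun_sum fun l _ =>
      (hia l m y hy).mul ((hq l).differentiable (by simp) y)
  have hBdiff : ∀ m : Fin 3, DifferentiableAt ℝ
      (fun z => ∑ σ : Fin 3, b 0 z σ * pd σ (fun w => b t w m) z) y := by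
    intro m
    exact DifferentiableAt.fun_sum fun σ _ =>
      ((hb0 σ).differentiable (by simp) y).mul ((hpdb σ m).differentiable (by simp) y)
  -- PART 3
  have part3 : (∑ ν : Fin 3, ∑ τ : Fin 3, ∑ m : Fin 3,
      levi μ ν τ * pd ν (fun z => v t z m) y * pd τ (fun z => v t z m) y) = 0 := by
    have h1 : (∑ ν : Fin 3, ∑ τ : Fin 3, ∑ m : Fin 3,
        levi μ ν τ * pd ν (fun z => v t z m) y * pd τ (fun z => v t z m) y)
        = ∑ ν : Fin 3, ∑ τ : Fin 3, levi μ ν τ *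
            ∑ m : Fin 3, pd ν (fun z => v t z m) y * pd τ (fun z => v t z m) y := by
      refine Finset.sum_congr rfl fun ν _ => Finset.sum_congr rfl fun τ _ => ?_
      rw [Finset.mul_sum]
      exact Finset.sum_congr rfl fun m _ => by ring
    rw [h1]
    exact levi_contract μ _ fun ν τ => Finset.sum_congr rfl fun m _ => mul_comm _ _
  -- bridging Jac and pd
  have hJ : ∀ (z : E3) (m τ : Fin 3), Jac (η t) z m τ = pd τ (fun w => η t w m) z :=
    fun _ _ _ => rfl
  -- Key2 : a * A = δ on Ω
  have key2 : ∀ z ∈ Ω, ∀ l τ : Fin 3,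
      (∑ m : Fin 3, (Jac (η t) z)⁻¹ l m * Jac (η t) z m τ)
        = if l = τ then (1 : ℝ) else 0 := by
    intro z hz l τ
    have h := Matrix.nonsing_inv_mul (Jac (η t) z)
      ((Matrix.isUnit_iff_isUnit_det _).1 (hinv t z hz))
    calc (∑ m : Fin 3, (Jac (η t) z)⁻¹ l m * Jac (η t) z m τ)
        = ((Jac (η t) z)⁻¹ * Jac (η t) z) l τ := (Matrix.mul_apply).symm
      _ = (1 : Matrix (Fin 3) (Fin 3) ℝ) l τ := by rw [h]
      _ = if l = τ then (1 : ℝ) else 0 := Matrix.one_apply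
  -- Key1 : differentiate a * A = δ
  have key1 : ∀ l τ ν : Fin 3,
      (∑ m : Fin 3, pd ν (fun z => (Jac (η t) z)⁻¹ l m) y * Jac (η t) y m τ)
        = -∑ m : Fin 3, (Jac (η t) y)⁻¹ l m
            * pd ν (fun z => pd τ (fun w => η t w m) z) y := by
    intro l τ ν
    have hYY : (∑ m : Fin 3, (Jac (η t) y)⁻¹ l m
          * pd ν (fun z => pd τ (fun w => η t w m) z) y)
        = ∑ m : Fin 3, (Jac (η t) y)⁻¹ l m * pd ν (fun z => Jac (η t) z m τ) y := rfl
    rw [hYY]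
    have hev : (fun z => ∑ m : Fin 3, (Jac (η t) z)⁻¹ l m * Jac (η t) z m τ)
        =ᶠ[𝓝 y] fun _ => if l = τ then (1 : ℝ) else 0 := by
      filter_upwards [hyΩ] with z hz
      exact key2 z hz l τ
    have h0 : pd ν (fun z => ∑ m : Fin 3, (Jac (η t) z)⁻¹ l m * Jac (η t) z m τ) y = 0 := by
      rw [pd_congr hev, pd_const]
    rw [pd_sum (f := fun m z => (Jac (η t) z)⁻¹ l m * Jac (η t) z m τ) _ (fun m _ => (hia l m y hy).mul ((hA m τ).differentiable (by simp) y))] at h0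
    have h1 : ∀ m : Fin 3,
        pd ν (fun z => (Jac (η t) z)⁻¹ l m * Jac (η t) z m τ) y
          = pd ν (fun z => (Jac (η t) z)⁻¹ l m) y * Jac (η t) y m τ
            + (Jac (η t) y)⁻¹ l m * pd ν (fun z => Jac (η t) z m τ) y :=
      fun m => pd_mul (hia l m y hy) ((hA m τ).differentiable (by simp) y) ν
    simp only [h1, Finset.sum_add_distrib] at h0
    linarith [h0]
  -- expand pd of P
  have hpdP : ∀ ν m : Fin 3,
      pd ν (fun z => ∑ l : Fin 3, (Jac (η t) z)⁻¹ l m * pd l (Q t) z) y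
        = ∑ l : Fin 3, (pd ν (fun z => (Jac (η t) z)⁻¹ l m) y * pd l (Q t) y
            + (Jac (η t) y)⁻¹ l m * pd ν (fun z => pd l (Q t) z) y) := by
    intro ν m
    rw [pd_sum (f := fun l z => (Jac (η t) z)⁻¹ l m * pd l (Q t) z) _ (fun l _ => (hia l m y hy).mul ((hq l).differentiable (by simp) y))]
    exact Finset.sum_congr rfl fun l _ =>
      pd_mul (hia l m y hy) ((hq l).differentiable (by simp) y) ν
  -- the contracted pressure term, in symmetric form
  have hg : ∀ ν τ : Fin 3,
      (∑ m : Fin 3, pd ν (fun z => ∑ l : Fin 3, (Jac (η t) z)⁻¹ l m * pd l (Q t) z) y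
          * pd τ (fun z => η t z m) y)
        = (∑ l : Fin 3, pd l (Q t) y *
            (-∑ m : Fin 3, (Jac (η t) y)⁻¹ l m
              * pd ν (fun z => pd τ (fun w => η t w m) z) y))
          + pd ν (fun z => pd τ (Q t) z) y := by
    intro ν τ
    calc (∑ m : Fin 3, pd ν (fun z => ∑ l : Fin 3, (Jac (η t) z)⁻¹ l m * pd l (Q t) z) y
          * pd τ (fun z => η t z m) y)
        = ∑ m : Fin 3, ∑ l : Fin 3,
            (pd ν (fun z => (Jac (η t) z)⁻¹ l m) y * pd l (Q t) y
              + (Jac (η t) y)⁻¹ l m * pd ν (fun z => pd l (Q t) z) y) * Jac (η t) y m τ := by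
          refine Finset.sum_congr rfl fun m _ => ?_
          rw [hpdP ν m, hJ, Finset.sum_mul]
      _ = ∑ l : Fin 3, ∑ m : Fin 3,
            (pd ν (fun z => (Jac (η t) z)⁻¹ l m) y * pd l (Q t) y
              + (Jac (η t) y)⁻¹ l m * pd ν (fun z => pd l (Q t) z) y) * Jac (η t) y m τ :=
          Finset.sum_comm
      _ = ∑ l : Fin 3,
            ((pd l (Q t) y * ∑ m : Fin 3, pd ν (fun z => (Jac (η t) z)⁻¹ l m) y * Jac (η t) y m τ)
            + (pd ν (fun z => pd l (Q t) z) y *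
                ∑ m : Fin 3, (Jac (η t) y)⁻¹ l m * Jac (η t) y m τ)) := by
          refine Finset.sum_congr rfl fun l _ => ?_
          rw [Finset.mul_sum, Finset.mul_sum, ← Finset.sum_add_distrib]
          refine Finset.sum_congr rfl fun m _ => ?_
          ring
      _ = ∑ l : Fin 3,
            ((pd l (Q t) y *
              (-∑ m : Fin 3, (Jac (η t) y)⁻¹ l m
                * pd ν (fun z => pd τ (fun w => η t w m) z) y))
            + (pd ν (fun z => pd l (Q t) z) y * if l = τ then (1:ℝ) else 0)) := by
          refine Finset.sum_congr rfl fun l _ => ?_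
          rw [key1 l τ ν, key2 y hy l τ]
      _ = (∑ l : Fin 3, pd l (Q t) y *
            (-∑ m : Fin 3, (Jac (η t) y)⁻¹ l m
              * pd ν (fun z => pd τ (fun w => η t w m) z) y))
          + pd ν (fun z => pd τ (Q t) z) y := by
          rw [Finset.sum_add_distrib]
          congr 1
          simp [mul_ite]
  -- PART 2
  have part2 : (∑ ν : Fin 3, ∑ τ : Fin 3, ∑ m : Fin 3,
      levi μ ν τ * pd ν (fun z => ∑ l : Fin 3, (Jac (η t) z)⁻¹ l m * pd l (Q t) z) y
        * pd τ (fun z => η t z m) y) = 0 := by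
    have h1 : (∑ ν : Fin 3, ∑ τ : Fin 3, ∑ m : Fin 3,
        levi μ ν τ * pd ν (fun z => ∑ l : Fin 3, (Jac (η t) z)⁻¹ l m * pd l (Q t) z) y
          * pd τ (fun z => η t z m) y)
        = ∑ ν : Fin 3, ∑ τ : Fin 3, levi μ ν τ *
            ((∑ l : Fin 3, pd l (Q t) y *
              (-∑ m : Fin 3, (Jac (η t) y)⁻¹ l m
                * pd ν (fun z => pd τ (fun w => η t w m) z) y))
              + pd ν (fun z => pd τ (Q t) z) y) := by
      refine Finset.sum_congr rfl fun ν _ => Finset.sum_congr rfl fun τ _ => ?_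
      rw [← hg ν τ, Finset.mul_sum]
      exact Finset.sum_congr rfl fun m _ => by ring
    rw [h1]
    refine levi_contract μ _ fun ν τ => ?_
    have hηts : ∀ m : Fin 3, ContDiff ℝ (⊤ : ℕ∞) (fun w => η t w m) :=
      fun m => (hηm m).comp (contDiff_prodMk_right t)
    have hQts : ContDiff ℝ (⊤ : ℕ∞) (Q t) := hQ_smooth.comp (contDiff_prodMk_right t)
    congr 1
    · refine Finset.sum_congr rfl fun l _ => ?_
      congr 1
      congr 1
      refine Finset.sum_congr rfl fun m _ => ?_
      rw [clairaut _ (hηts m) y ν τ]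
    · exact clairaut _ hQts y ν τ
  refine ⟨?_, part2, part3⟩
  -- PART 1
  have hBstep : ∀ τ m : Fin 3, HasDerivAt (fun s => pd τ (fun z => η s z m) y)
      (pd τ (fun z => v t z m) y) t := by
    intro τ m
    unfold pd
    refine swap_time_space (fun p => η p.1 p.2 m) (hηm m) (fun z => v t z m) t y ?_ _
    filter_upwards [hyΩ] with z hz
    exact (hasDerivAt_pi.1 (hflow t z hz)) m
  have hAstep : ∀ ν m : Fin 3, HasDerivAt (fun s => pd ν (fun z => v s z m) y)
      (pd ν (fun z => -(∑ l : Fin 3, (Jac (η t) z)⁻¹ l m * pd l (Q t) z)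
        + ∑ σ : Fin 3, b 0 z σ * pd σ (fun w => b t w m) z) y) t := by
    intro ν m
    unfold pd
    refine swap_time_space (fun p => v p.1 p.2 m) (hvm m) _ t y ?_ _
    filter_upwards [hyΩ] with z hz
    exact heq t z hz m
  have hder : HasDerivAt
      (fun s => ∑ ν : Fin 3, ∑ τ : Fin 3, ∑ m : Fin 3,
        levi μ ν τ * pd ν (fun z => v s z m) y * pd τ (fun z => η s z m) y)
      (∑ ν : Fin 3, ∑ τ : Fin 3, ∑ m : Fin 3,
        (levi μ ν τ * pd ν (fun z => -(∑ l : Fin 3, (Jac (η t) z)⁻¹ l m * pd l (Q t) z)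
            + ∑ σ : Fin 3, b 0 z σ * pd σ (fun w => b t w m) z) y
          * pd τ (fun z => η t z m) y
        + levi μ ν τ * pd ν (fun z => v t z m) y * pd τ (fun z => v t z m) y)) t := by
    refine HasDerivAt.fun_sum fun ν _ => HasDerivAt.fun_sum fun τ _ => HasDerivAt.fun_sum fun m _ => ?_
    have h1 := ((hAstep ν m).const_mul (levi μ ν τ)).mul (hBstep τ m)
    exact h1
  have hWsplit : ∀ ν m : Fin 3,
      pd ν (fun z => -(∑ l : Fin 3, (Jac (η t) z)⁻¹ l m * pd l (Q t) z)
        + ∑ σ : Fin 3, b 0 z σ * pd σ (fun w => b t w m) z) y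
      = -pd ν (fun z => ∑ l : Fin 3, (Jac (η t) z)⁻¹ l m * pd l (Q t) z) y
        + pd ν (fun z => ∑ σ : Fin 3, b 0 z σ * pd σ (fun w => b t w m) z) y :=
    fun ν m => pd_neg_add (hPdiff m) (hBdiff m) ν
  have hfinal : (∑ ν : Fin 3, ∑ τ : Fin 3, ∑ m : Fin 3,
        (levi μ ν τ * pd ν (fun z => -(∑ l : Fin 3, (Jac (η t) z)⁻¹ l m * pd l (Q t) z)
            + ∑ σ : Fin 3, b 0 z σ * pd σ (fun w => b t w m) z) y
          * pd τ (fun z => η t z m) y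
        + levi μ ν τ * pd ν (fun z => v t z m) y * pd τ (fun z => v t z m) y))
      = ∑ ν : Fin 3, ∑ τ : Fin 3, ∑ m : Fin 3,
          levi μ ν τ *
            pd ν (fun z => ∑ σ : Fin 3, b 0 z σ * pd σ (fun w => b t w m) z) y *
            pd τ (fun z => η t z m) y := by
    have e1 : ∀ ν τ m : Fin 3,
        (levi μ ν τ * pd ν (fun z => -(∑ l : Fin 3, (Jac (η t) z)⁻¹ l m * pd l (Q t) z)
            + ∑ σ : Fin 3, b 0 z σ * pd σ (fun w => b t w m) z) y
          * pd τ (fun z => η t z m) y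
        + levi μ ν τ * pd ν (fun z => v t z m) y * pd τ (fun z => v t z m) y)
        = (levi μ ν τ *
            pd ν (fun z => ∑ σ : Fin 3, b 0 z σ * pd σ (fun w => b t w m) z) y *
            pd τ (fun z => η t z m) y
          - levi μ ν τ *
            pd ν (fun z => ∑ l : Fin 3, (Jac (η t) z)⁻¹ l m * pd l (Q t) z) y *
            pd τ (fun z => η t z m) y)
          + levi μ ν τ * pd ν (fun z => v t z m) y * pd τ (fun z => v t z m) y := by
      intro ν τ m
      rw [hWsplit ν m]
      ring
    simp only [e1]
    simp only [Finset.sum_add_distrib, Finset.sum_sub_distrib]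
    rw [part2, part3]
    ring
  exact hfinal ▸ hder
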